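/- arXiv:1812.03713 — 2 statements merged into one kernel-verified Lean document; each statement's English description precedes it below -/
import Mathlib

section
/- Let D be an integral domain. The following are equivalent: (i) D is t-local (local with maximal ideal a t-ideal); (ii) D is w-local (local with maximal ideal a w-ideal); (iii) D is a local DW-domain (local and every nonzero fractional ideal of D is a w-ideal). -/
open scoped nonZeroDivisors

/-- The `t`-closure of a fractional ideal `E` of an integral domain `D`:
the union (here: supremum, which is a directed union) of `F^v = (F⁻¹)⁻¹` over all
nonzero finitely generated fractional subideals `F` of `E`, viewed as a
`D`-submodule of the fraction field of `D`. -/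
noncomputable def tClos (D : Type*) [CommRing D] [IsDomain D]
    (E : FractionalIdeal D⁰ (FractionRing D)) : Submodule D (FractionRing D) :=
  ⨆ F ∈ {F : FractionalIdeal D⁰ (FractionRing D) |
      F ≠ 0 ∧ F ≤ E ∧ (F : Submodule D (FractionRing D)).FG},
    (((F⁻¹)⁻¹ : FractionalIdeal D⁰ (FractionRing D)) : Submodule D (FractionRing D))

/-- An integral ideal `I` of an integral domain `D` is a `t`-ideal if `I = I^t`. -/
def Ideal.IsT {D : Type*} [CommRing D] [IsDomain D] (I : Ideal D) : Prop :=
  ((I : FractionalIdeal D⁰ (FractionRing D)) : Submodule D (FractionRing D)) = tClos D I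

/-- A Glaz–Vasconcelos ideal of `D`: a nonzero finitely generated integral ideal `J`
with `J⁻¹ = D`. -/
def IsGV {D : Type*} [CommRing D] [IsDomain D] (J : Ideal D) : Prop :=
  J ≠ ⊥ ∧ J.FG ∧ ((J : FractionalIdeal D⁰ (FractionRing D)))⁻¹ = 1

/-- The `w`-closure of a fractional ideal `E`:
`E^w = {x ∈ K : xJ ⊆ E for some GV-ideal J}`. -/
def wClos (D : Type*) [CommRing D] [IsDomain D]
    (E : FractionalIdeal D⁰ (FractionRing D)) : Set (FractionRing D) :=
  {x : FractionRing D | ∃ J : Ideal D, IsGV J ∧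
    ∀ j ∈ J, algebraMap D (FractionRing D) j * x ∈ E}

/-- A fractional ideal `E` is a `w`-ideal if `E = E^w`. -/
def IsW {D : Type*} [CommRing D] [IsDomain D]
    (E : FractionalIdeal D⁰ (FractionRing D)) : Prop :=
  ((E : Submodule D (FractionRing D)) : Set (FractionRing D)) = wClos D E

/-!
In a local domain each of the three conditions says that `D` is its only GV-ideal. A proper
GV-ideal `J` lies in `𝔪` and has `J^v = D`, so `1` lies in `𝔪^t` and in `𝔪^w`. Conversely,
without proper GV-ideals the `w`-closure is the identity, and a nonzero finitely generated
`F ⊆ 𝔪` has `F^v ⊆ 𝔪`: otherwise `1 ∈ F^v`, i.e. `F⁻¹ ⊆ D`, so `F⁻¹ = D` and `F` would be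
a proper GV-ideal.
-/

open FractionalIdeal

namespace FractionalIdeal

variable {R K : Type*} [CommRing R] [Field K] [Algebra R K] [IsFractionRing R K]

theorem _root_.Ideal.eq_top_of_one_mem_coeIdeal {J : Ideal R}
    (h : (1 : K) ∈ (J : FractionalIdeal R⁰ K)) : J = ⊤ := by
  rwa [← one_le, ← coeIdeal_top, coeIdeal_le_coeIdeal, top_le_iff] at h

variable [IsDomain R] {I : FractionalIdeal R⁰ K}

theorem inv_ne_zero_of_ne_zero (hI : I ≠ 0) : I⁻¹ ≠ 0 := fun h =>
  (bot_lt_mul_inv hI).ne' (by rw [h, mul_zero]; rfl)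

theorem le_inv_inv (hI : I ≠ 0) : I ≤ I⁻¹⁻¹ := fun x hx =>
  (mem_inv_iff (inv_ne_zero_of_ne_zero hI)).2 fun y hy =>
    mul_comm x y ▸ (mem_inv_iff hI).1 hy x hx

theorem one_mem_inv_iff_le_one (hI : I ≠ 0) : (1 : K) ∈ I⁻¹ ↔ I ≤ 1 := by
  simp only [mem_inv_iff hI, one_mul]
  rfl

theorem one_le_inv (hI : I ≠ 0) (hI1 : I ≤ 1) : 1 ≤ I⁻¹ := by
  simpa only [inv_one] using inv_anti_mono hI (one_ne_zero' (FractionalIdeal R⁰ K)) hI1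

theorem inv_inv_le_one (hI : I ≠ 0) (hI1 : I ≤ 1) : I⁻¹⁻¹ ≤ 1 := by
  simpa only [inv_one] using
    inv_anti_mono (one_ne_zero' (FractionalIdeal R⁰ K)) (inv_ne_zero_of_ne_zero hI)
      (one_le_inv hI hI1)

end FractionalIdeal

section

variable {D : Type*} [CommRing D] [IsDomain D]

local notation "K" => FractionRing D

theorem isGV_top : IsGV (⊤ : Ideal D) :=
  ⟨top_ne_bot, ⟨{1}, by simp⟩, by rw [coeIdeal_top, inv_one]⟩

theorem isGV_of_one_mem_inv_inv {J : Ideal D} (hJ : J ≠ ⊥) (hfg : J.FG)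
    (h1 : (1 : K) ∈ (J : FractionalIdeal D⁰ K)⁻¹⁻¹) : IsGV J := by
  have hJ0 : (J : FractionalIdeal D⁰ K) ≠ 0 := coeIdeal_ne_zero.2 hJ
  refine ⟨hJ, hfg, le_antisymm ?_ (one_le_inv hJ0 coeIdeal_le_one)⟩
  exact (one_mem_inv_iff_le_one (inv_ne_zero_of_ne_zero hJ0)).1 h1

theorem IsGV.eq_top_of_le_of_isW {I J : Ideal D} (hJ : IsGV J) (hJI : J ≤ I)
    (hI : IsW (I : FractionalIdeal D⁰ K)) : I = ⊤ := by
  have h1 : (1 : K) ∈ wClos D I :=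
    ⟨J, hJ, fun j hj => by rw [mul_one]; exact (mem_coeIdeal D⁰).2 ⟨j, hJI hj, rfl⟩⟩
  rw [← hI] at h1
  exact Ideal.eq_top_of_one_mem_coeIdeal h1

theorem IsGV.eq_top_of_forall_isW {J : Ideal D} (hJ : IsGV J)
    (h : ∀ E : FractionalIdeal D⁰ K, E ≠ 0 → IsW E) : J = ⊤ :=
  hJ.eq_top_of_le_of_isW le_rfl (h _ (coeIdeal_ne_zero.2 hJ.1))

theorem IsGV.eq_top_of_le_of_isT {I J : Ideal D} (hJ : IsGV J) (hJI : J ≤ I) (hI : I.IsT) :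
    I = ⊤ := by
  have hfg : ((J : FractionalIdeal D⁰ K) : Submodule D K).FG :=
    (coeIdeal_fg (P := K) D⁰ (IsFractionRing.injective D K) J).2 hJ.2.1
  have hJv : (((J : FractionalIdeal D⁰ K)⁻¹⁻¹ : FractionalIdeal D⁰ K) : Submodule D K) ≤
      tClos D I :=
    le_iSup₂_of_le (J : FractionalIdeal D⁰ K)
      ⟨coeIdeal_ne_zero.2 hJ.1, (coeIdeal_le_coeIdeal K).2 hJI, hfg⟩ le_rfl
  have h1 : (1 : K) ∈ tClos D I := hJv (by rw [hJ.2.2, inv_one]; exact one_mem_one _)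
  rw [← hI] at h1
  exact Ideal.eq_top_of_one_mem_coeIdeal h1

theorem isW_of_forall_isGV_eq_top (h : ∀ J : Ideal D, IsGV J → J = ⊤)
    (E : FractionalIdeal D⁰ K) : IsW E := by
  ext x
  constructor
  · intro hx
    exact ⟨⊤, isGV_top, fun j _ => Algebra.smul_def j x ▸ Submodule.smul_mem _ j hx⟩
  · rintro ⟨J, hJ, hJx⟩
    simpa using hJx 1 (h J hJ ▸ Submodule.mem_top)

theorem coe_le_tClos (E : FractionalIdeal D⁰ K) : (E : Submodule D K) ≤ tClos D E := by
  intro x hx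
  rcases eq_or_ne x 0 with rfl | hx0
  · exact zero_mem _
  have hF0 : spanSingleton D⁰ x ≠ 0 := spanSingleton_ne_zero_iff.2 hx0
  have hfg : (spanSingleton D⁰ x : Submodule D K).FG := by
    rw [coe_spanSingleton]
    exact Submodule.fg_span_singleton x
  have hxv : x ∈ (spanSingleton D⁰ x)⁻¹⁻¹ :=
    le_inv_inv hF0 (mem_spanSingleton_self D⁰ x)
  exact le_iSup₂_of_le (f := fun F _ => ((F⁻¹⁻¹ : FractionalIdeal D⁰ K) : Submodule D K))
    (spanSingleton D⁰ x) ⟨hF0, spanSingleton_le_iff_mem.2 hx, hfg⟩ le_rfl hxv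

variable [IsLocalRing D]

open IsLocalRing

local notation "𝔪" => maximalIdeal D

theorem IsGV.eq_top_of_isT_maximalIdeal {J : Ideal D} (hJ : IsGV J) (hT : (𝔪).IsT) : J = ⊤ :=
  by_contra fun hne =>
    (maximalIdeal.isMaximal D).ne_top (hJ.eq_top_of_le_of_isT (le_maximalIdeal hne) hT)

theorem IsGV.eq_top_of_isW_maximalIdeal {J : Ideal D} (hJ : IsGV J)
    (hW : IsW ((𝔪 : Ideal D) : FractionalIdeal D⁰ K)) : J = ⊤ :=
  by_contra fun hne =>
    (maximalIdeal.isMaximal D).ne_top (hJ.eq_top_of_le_of_isW (le_maximalIdeal hne) hW)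

theorem inv_inv_le_maximalIdeal (h : ∀ J : Ideal D, IsGV J → J = ⊤)
    {F : FractionalIdeal D⁰ K} (hF0 : F ≠ 0) (hF : F ≤ (𝔪 : Ideal D))
    (hfg : (F : Submodule D K).FG) : F⁻¹⁻¹ ≤ (𝔪 : Ideal D) := by
  obtain ⟨J, rfl⟩ := le_one_iff_exists_coeIdeal.1 (hF.trans coeIdeal_le_one)
  obtain ⟨I, hI⟩ := le_one_iff_exists_coeIdeal.1 (inv_inv_le_one hF0 (hF.trans coeIdeal_le_one))
  rw [← hI, coeIdeal_le_coeIdeal]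
  refine le_maximalIdeal fun hItop => ?_
  have hJ : IsGV J := isGV_of_one_mem_inv_inv (coeIdeal_ne_zero.1 hF0)
    ((coeIdeal_fg (P := K) D⁰ (IsFractionRing.injective D K) J).1 hfg)
    (by rw [← hI, hItop, coeIdeal_top]; exact one_mem_one _)
  rw [coeIdeal_le_coeIdeal, h J hJ, top_le_iff] at hF
  exact (maximalIdeal.isMaximal D).ne_top hF

theorem isT_maximalIdeal_of_forall_isGV_eq_top (h : ∀ J : Ideal D, IsGV J → J = ⊤) :
    (𝔪).IsT :=
  le_antisymm (coe_le_tClos _) <| iSup₂_le fun _ ⟨hF0, hF, hfg⟩ =>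
    coe_le_coe.2 (inv_inv_le_maximalIdeal h hF0 hF hfg)

end

/-- For a local integral domain `D` the following are equivalent:
(i) `D` is `t`-local (its maximal ideal is a `t`-ideal);
(ii) `D` is `w`-local (its maximal ideal is a `w`-ideal);
(iii) `D` is a DW-domain (every nonzero fractional ideal of `D` is a `w`-ideal). -/
theorem t_local_iff_w_local_iff_local_dw (D : Type*) [CommRing D] [IsDomain D]
    [IsLocalRing D] :
    List.TFAE
      [ (IsLocalRing.maximalIdeal D).IsT,
        IsW ((IsLocalRing.maximalIdeal D : Ideal D) :
          FractionalIdeal D⁰ (FractionRing D)),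
        ∀ E : FractionalIdeal D⁰ (FractionRing D), E ≠ 0 → IsW E ] := by
  tfae_have 1 → 3 := fun h E _ =>
    isW_of_forall_isGV_eq_top (fun _ hJ => hJ.eq_top_of_isT_maximalIdeal h) E
  tfae_have 3 → 2 := fun h => isW_of_forall_isGV_eq_top (fun _ hJ => hJ.eq_top_of_forall_isW h) _
  tfae_have 2 → 1 := fun h =>
    isT_maximalIdeal_of_forall_isGV_eq_top fun _ hJ => hJ.eq_top_of_isW_maximalIdeal h
  tfae_finish
end

section
/- Let D be an integral domain. The following are equivalent: (i) every overring of D (ring between D and its quotient field) is t-linked over D; (ii) every valuation overring of D is t-linked over D; (iii) every maximal ideal of D is a t-ideal; (iv) for every nonzero proper ideal I of D, I^t ≠ D; (v) for every nonzero proper finitely generated ideal J of D, J^t ≠ D; (vi) every t-invertible ideal of D is invertible. -/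
open scoped nonZeroDivisors

/-- `I^t = A` for an integral ideal `I` of a domain `A`. -/
noncomputable def TClosEqTop (A : Type*) [CommRing A] [IsDomain A] (I : Ideal A) : Prop :=
  tClos A (I : FractionalIdeal A⁰ (FractionRing A)) =
    ((1 : FractionalIdeal A⁰ (FractionRing A)) : Submodule A (FractionRing A))

/-- An overring `T` of `D` (a subalgebra of the quotient field of `D`) is `t`-linked
over `D` if for every nonzero finitely generated ideal `J` of `D` with `J^t = D` one
has `(JT)^t = T`, the latter `t`-operation being computed in `T`. -/
def TLinked {D : Type*} [CommRing D] [IsDomain D]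
    (T : Subalgebra D (FractionRing D)) : Prop :=
  ∀ J : Ideal D, J ≠ ⊥ → J.FG → TClosEqTop D J →
    TClosEqTop T (J.map (algebraMap D T))

/-!
Every condition says that `I^t ≠ D` for all proper ideals `I`. The `t`-closure of an integral
ideal is an integral ideal containing it, so this holds exactly when maximal ideals are
`t`-ideals; as `I^t` is the directed union of the `J^v` with `J ⊆ I` finitely generated, it
suffices to test finitely generated ideals. For `t`-invertibility, `I I⁻¹` is an integral ideal
with `(I I⁻¹)^t = D`, while an invertible `I` satisfies `I^t ⊆ I^v = I`. Finally, if `J^t = D`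
for a proper finitely generated `J ⊆ M` with `M` maximal, a valuation overring `V` dominating
`D_M` is not `t`-linked: `JV` is a proper principal ideal, hence `t`-closed in `V`.
-/

open FractionalIdeal

section TClosure

variable {A : Type*} [CommRing A] [IsDomain A]

local notation "K" => FractionRing A

lemma FractionalIdeal.inv_ne_zero_of_ne_zero_s8 {E : FractionalIdeal A⁰ K} (hE : E ≠ 0) :
    E⁻¹ ≠ 0 := by
  obtain ⟨a, ha, haE⟩ := E.isFractional
  have ha_mem : algebraMap A K a ∈ E⁻¹ := by
    refine (mem_inv_iff hE).mpr fun y hy => ?_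
    obtain ⟨r, hr⟩ := haE y hy
    exact (mem_one_iff _).mpr ⟨r, by rw [hr, Algebra.smul_def]⟩
  intro h0
  rw [h0, mem_zero_iff] at ha_mem
  exact nonZeroDivisors.ne_zero ha (IsFractionRing.to_map_eq_zero_iff.mp ha_mem)

lemma FractionalIdeal.mul_inv_le_one (E : FractionalIdeal A⁰ K) : E * E⁻¹ ≤ 1 :=
  mul_one_div_le_one

lemma FractionalIdeal.inv_inv_mono {E F : FractionalIdeal A⁰ K} (hF : F ≠ 0) (h : F ≤ E) :
    F⁻¹⁻¹ ≤ E⁻¹⁻¹ := by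
  have hE : E ≠ 0 := ne_bot_of_le_ne_bot hF h
  exact inv_anti_mono (inv_ne_zero_of_ne_zero_s8 hE) (inv_ne_zero_of_ne_zero_s8 hF)
    (inv_anti_mono hF hE h)

lemma inv_inv_le_tClos {E F : FractionalIdeal A⁰ K} (hF : F ≠ 0) (hFE : F ≤ E)
    (hfg : (F : Submodule A K).FG) :
    ((F⁻¹⁻¹ : FractionalIdeal A⁰ K) : Submodule A K) ≤ tClos A E :=
  le_iSup₂_of_le F ⟨hF, hFE, hfg⟩ le_rfl

lemma tClos_mono {E E' : FractionalIdeal A⁰ K} (h : E ≤ E') : tClos A E ≤ tClos A E' :=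
  iSup₂_le fun _ hF => inv_inv_le_tClos hF.1 (hF.2.1.trans h) hF.2.2

lemma tClos_le_inv_inv (E : FractionalIdeal A⁰ K) :
    tClos A E ≤ ((E⁻¹⁻¹ : FractionalIdeal A⁰ K) : Submodule A K) :=
  iSup₂_le fun _ hF => coe_le_coe.mpr (inv_inv_mono hF.1 hF.2.1)

lemma tClos_eq_inv_inv_of_fg {E : FractionalIdeal A⁰ K} (hE : E ≠ 0)
    (hfg : (E : Submodule A K).FG) :
    tClos A E = ((E⁻¹⁻¹ : FractionalIdeal A⁰ K) : Submodule A K) :=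
  le_antisymm (tClos_le_inv_inv E) (inv_inv_le_tClos hE le_rfl hfg)

lemma tClos_zero : tClos A (0 : FractionalIdeal A⁰ K) = ⊥ :=
  le_bot_iff.mp <| iSup₂_le fun _ hF => absurd (FractionalIdeal.le_zero_iff.mp hF.2.1) hF.1

lemma tClos_spanSingleton (x : K) :
    tClos A (spanSingleton A⁰ x) = (spanSingleton A⁰ x : Submodule A K) := by
  rcases eq_or_ne x 0 with rfl | hx
  · rw [spanSingleton_zero, tClos_zero, coe_zero]
  · rw [tClos_eq_inv_inv_of_fg (spanSingleton_ne_zero_iff.mpr hx)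
      (by rw [coe_spanSingleton]; exact Submodule.fg_span_singleton x),
      spanSingleton_inv, spanSingleton_inv, inv_inv]

lemma tClos_one :
    tClos A (1 : FractionalIdeal A⁰ K) = ((1 : FractionalIdeal A⁰ K) : Submodule A K) := by
  rw [← spanSingleton_one, tClos_spanSingleton]

lemma le_tClos (E : FractionalIdeal A⁰ K) : (E : Submodule A K) ≤ tClos A E := fun x hx =>
  tClos_mono (spanSingleton_le_iff_mem.mpr hx)
    (by rw [tClos_spanSingleton, coe_spanSingleton]; exact Submodule.mem_span_singleton_self x)

lemma tClos_le_one {E : FractionalIdeal A⁰ K} (h : E ≤ 1) :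
    tClos A E ≤ ((1 : FractionalIdeal A⁰ K) : Submodule A K) :=
  tClos_one (A := A) ▸ tClos_mono h

lemma exists_fg_le_of_mem_tClos {E : FractionalIdeal A⁰ K} (hE : E ≠ 0) {x : K}
    (hx : x ∈ tClos A E) :
    ∃ F : FractionalIdeal A⁰ K, F ≤ E ∧ (F : Submodule A K).FG ∧ x ∈ tClos A F := by
  let s := {F : FractionalIdeal A⁰ K | F ≠ 0 ∧ F ≤ E ∧ (F : Submodule A K).FG}
  have : Nonempty s := by
    obtain ⟨y, hyE, hy0⟩ :=
      Submodule.exists_mem_ne_zero_of_ne_bot (coeToSubmodule_ne_bot.mpr hE)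
    exact ⟨⟨spanSingleton A⁰ y, spanSingleton_ne_zero_iff.mpr hy0,
      spanSingleton_le_iff_mem.mpr hyE,
      by rw [coe_spanSingleton]; exact Submodule.fg_span_singleton y⟩⟩
  have hdir :
      Directed (· ≤ ·) fun F : s => ((F.1⁻¹⁻¹ : FractionalIdeal A⁰ K) : Submodule A K) := by
    rintro ⟨F₁, hF₁, hF₁E, hF₁fg⟩ ⟨F₂, hF₂, hF₂E, hF₂fg⟩
    refine ⟨⟨F₁ ⊔ F₂, ne_bot_of_le_ne_bot hF₁ le_sup_left, sup_le hF₁E hF₂E,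
      by rw [coe_sup]; exact hF₁fg.sup hF₂fg⟩,
      coe_le_coe.mpr (inv_inv_mono hF₁ le_sup_left),
      coe_le_coe.mpr (inv_inv_mono hF₂ le_sup_right)⟩
  have htClos : tClos A E = ⨆ F : s, ((F.1⁻¹⁻¹ : FractionalIdeal A⁰ K) : Submodule A K) :=
    iSup_subtype'
  rw [htClos] at hx
  obtain ⟨⟨F, hF0, hFE, hFfg⟩, hxF⟩ := (Submodule.mem_iSup_of_directed _ hdir).mp hx
  exact ⟨F, hFE, hFfg, by rwa [tClos_eq_inv_inv_of_fg hF0 hFfg]⟩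

lemma tClosEqTop_iff_one_mem {I : Ideal A} : TClosEqTop A I ↔ (1 : K) ∈ tClos A I :=
  ⟨fun h => h ▸ (mem_one_iff _).mpr ⟨1, map_one _⟩, fun h =>
    le_antisymm (tClos_le_one coeIdeal_le_one) (by rw [coe_one]; exact Submodule.one_le.mpr h)⟩

lemma tClosEqTop_top : TClosEqTop A ⊤ := by
  rw [TClosEqTop, coeIdeal_top, tClos_one]

lemma not_tClosEqTop_bot : ¬TClosEqTop A ⊥ := by
  rw [tClosEqTop_iff_one_mem, coeIdeal_bot, tClos_zero, Submodule.mem_bot]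
  exact one_ne_zero

lemma TClosEqTop.mono {I J : Ideal A} (hIJ : I ≤ J) (hI : TClosEqTop A I) : TClosEqTop A J :=
  tClosEqTop_iff_one_mem.mpr <|
    tClos_mono (coeIdeal_le_coeIdeal _ |>.mpr hIJ) (tClosEqTop_iff_one_mem.mp hI)

lemma forall_not_tClosEqTop_iff :
    (∀ I : Ideal A, I ≠ ⊥ → I ≠ ⊤ → ¬TClosEqTop A I) ↔
      ∀ I : Ideal A, TClosEqTop A I → I = ⊤ := by
  refine ⟨fun h I hI => by_contra fun hItop => ?_, fun h I _ hItop hI => hItop (h I hI)⟩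
  rcases eq_or_ne I ⊥ with rfl | hI0
  exacts [not_tClosEqTop_bot hI, h I hI0 hItop hI]

lemma exists_fg_le_of_tClosEqTop {I : Ideal A} (hI : TClosEqTop A I) :
    ∃ J ≤ I, J.FG ∧ TClosEqTop A J := by
  have hI0 : (I : FractionalIdeal A⁰ K) ≠ 0 :=
    coeIdeal_ne_zero.mpr fun h => not_tClosEqTop_bot (h ▸ hI)
  obtain ⟨F, hFI, hFfg, hF⟩ := exists_fg_le_of_mem_tClos hI0 (tClosEqTop_iff_one_mem.mp hI)
  obtain ⟨J, rfl⟩ := le_one_iff_exists_coeIdeal.mp (hFI.trans coeIdeal_le_one)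
  exact ⟨J, (coeIdeal_le_coeIdeal _).mp hFI,
    (coeIdeal_fg A⁰ (IsFractionRing.injective A K) J).mp hFfg, tClosEqTop_iff_one_mem.mpr hF⟩

lemma exists_ideal_tClos_eq (I : Ideal A) :
    ∃ N : Ideal A, I ≤ N ∧ tClos A I = ((N : FractionalIdeal A⁰ K) : Submodule A K) := by
  have hrange : tClos A I ≤ LinearMap.range (Algebra.linearMap A K) := by
    simpa only [coe_one, Submodule.one_eq_range] using tClos_le_one (A := A) coeIdeal_le_one
  refine ⟨(tClos A I).comap (Algebra.linearMap A K), fun x hx => le_tClos _ ?_, ?_⟩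
  · exact (mem_coeIdeal _).mpr ⟨x, hx, rfl⟩
  · rw [coe_coeIdeal, IsLocalization.coeSubmodule, Submodule.map_comap_eq_self hrange]

lemma tClos_mul_inv_eq_one {I : Ideal A} (hI : TClosEqTop A I) :
    tClos A ((I : FractionalIdeal A⁰ K) * (I : FractionalIdeal A⁰ K)⁻¹) =
      ((1 : FractionalIdeal A⁰ K) : Submodule A K) :=
  le_antisymm (tClos_le_one (FractionalIdeal.mul_inv_le_one _))
    (hI ▸ tClos_mono (coe_ideal_le_self_mul_inv K I))

namespace Ideal

lemma IsT.eq_top_of_tClosEqTop {I : Ideal A} (hI : I.IsT) (h : TClosEqTop A I) : I = ⊤ := by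
  rw [← one_eq_top]
  exact coeIdeal_eq_one.mp (coeToSubmodule_injective (hI.trans h))

lemma isT_of_isPrincipal {I : Ideal A} (hI : I.IsPrincipal) : I.IsT := by
  obtain ⟨a, rfl⟩ := hI
  rw [IsT, submodule_span_eq, coeIdeal_span_singleton, tClos_spanSingleton]

lemma isT_of_mul_inv_eq_one {I : Ideal A}
    (hI : (I : FractionalIdeal A⁰ K) * (I : FractionalIdeal A⁰ K)⁻¹ = 1) : I.IsT := by
  have hinv : (I : FractionalIdeal A⁰ K)⁻¹⁻¹ = I :=
    (right_inverse_eq K _ _ (by rw [mul_comm, hI])).symm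
  exact le_antisymm (le_tClos _) ((tClos_le_inv_inv _).trans_eq (by rw [hinv]))

lemma IsMaximal.isT_of_not_tClosEqTop {M : Ideal A} (hM : M.IsMaximal) (h : ¬TClosEqTop A M) :
    M.IsT := by
  obtain ⟨N, hMN, hN⟩ := exists_ideal_tClos_eq M
  by_cases hNtop : N = ⊤
  · exact absurd (hN.trans (by rw [hNtop, coeIdeal_top])) h
  · rw [IsT, hN, hM.eq_of_le hNtop hMN]

lemma eq_top_of_tClosEqTop_of_fg [IsBezout A] {I : Ideal A} (hfg : I.FG) (h : TClosEqTop A I) :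
    I = ⊤ :=
  (isT_of_isPrincipal (IsBezout.isPrincipal_of_FG I hfg)).eq_top_of_tClosEqTop h

end Ideal

end TClosure

lemma Ideal.exists_valuationRing_map_ne_top {D : Type*} [CommRing D] [IsDomain D] {J : Ideal D}
    (hJ : J ≠ ⊤) :
    ∃ T : Subalgebra D (FractionRing D), ValuationRing T ∧ J.map (algebraMap D T) ≠ ⊤ := by
  obtain ⟨M, hM, hJM⟩ := J.exists_le_maximal hJ
  let R := Localization.AtPrime M
  let f : R →+* FractionRing D := IsLocalization.lift (M := M.primeCompl) fun y =>
    IsLocalization.map_units (M := D⁰) _ ⟨y, mem_nonZeroDivisors_of_ne_zero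
      fun h => y.2 (h ▸ M.zero_mem)⟩
  -- a valuation overring dominating `D_M`
  obtain ⟨V, hV, hloc⟩ := IsLocalRing.exists_factor_valuationRing f
  let T : Subalgebra D (FractionRing D) :=
    { V.toSubring with algebraMap_mem' := fun d => by simpa [f] using hV (algebraMap D R d) }
  have : ValuationRing T := inferInstanceAs (ValuationRing V)
  have : IsLocalRing T := inferInstanceAs (IsLocalRing V)
  let g : R →+* T := f.codRestrict T hV
  have : IsLocalHom g := hloc
  have hg : algebraMap D T = g.comp (algebraMap D R) := by ext; simp [g, f]
  refine ⟨T, inferInstance, ?_⟩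
  rw [hg, ← Ideal.map_map]
  refine ne_top_of_le_ne_top (IsLocalRing.maximalIdeal.isMaximal T).ne_top
    ((Ideal.map_mono ?_).trans (IsLocalRing.map_maximalIdeal_le g))
  rw [← IsLocalization.AtPrime.map_eq_maximalIdeal M R]
  exact Ideal.map_mono hJM

/-- For an integral domain `D` the following are equivalent:
(i) every overring of `D` is `t`-linked over `D`;
(ii) every valuation overring of `D` is `t`-linked over `D`;
(iii) every maximal ideal of `D` is a `t`-ideal;
(iv) `I^t ≠ D` for every nonzero proper ideal `I` of `D`;
(v) `J^t ≠ D` for every nonzero proper finitely generated ideal `J` of `D`;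
(vi) every `t`-invertible ideal of `D` is invertible. -/
theorem t_linkative_tfae (D : Type*) [CommRing D] [IsDomain D] :
    List.TFAE
      [ ∀ T : Subalgebra D (FractionRing D), TLinked T,
        ∀ T : Subalgebra D (FractionRing D), ValuationRing T → TLinked T,
        ∀ M : Ideal D, M.IsMaximal → M.IsT,
        ∀ I : Ideal D, I ≠ ⊥ → I ≠ ⊤ → ¬ TClosEqTop D I,
        ∀ J : Ideal D, J ≠ ⊥ → J ≠ ⊤ → J.FG → ¬ TClosEqTop D J,
        ∀ I : Ideal D,
          tClos D ((I : FractionalIdeal D⁰ (FractionRing D)) *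
              (I : FractionalIdeal D⁰ (FractionRing D))⁻¹) =
            ((1 : FractionalIdeal D⁰ (FractionRing D)) : Submodule D (FractionRing D)) →
          (I : FractionalIdeal D⁰ (FractionRing D)) *
            (I : FractionalIdeal D⁰ (FractionRing D))⁻¹ = 1 ] := by
  tfae_have 1 → 2 := fun h1 T _ => h1 T
  tfae_have 2 → 5 := fun h2 J hJ0 hJtop hfg hJ => by
    obtain ⟨T, hT, hJT⟩ := J.exists_valuationRing_map_ne_top hJtop
    exact hJT (Ideal.eq_top_of_tClosEqTop_of_fg (hfg.map _) (h2 T hT J hJ0 hfg hJ))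
  tfae_have 5 → 4 := fun h5 I _ hItop hI => by
    obtain ⟨J, hJI, hfg, hJ⟩ := exists_fg_le_of_tClosEqTop hI
    exact h5 J (fun h => not_tClosEqTop_bot (h ▸ hJ)) (ne_top_of_le_ne_top hItop hJI) hfg hJ
  tfae_have 4 → 5 := fun h4 J hJ0 hJtop _ => h4 J hJ0 hJtop
  tfae_have 5 → 1 := fun h5 T J hJ0 hfg hJ => by
    obtain rfl : J = ⊤ := by_contra fun hJtop => h5 J hJ0 hJtop hfg hJ
    rw [Ideal.map_top]
    exact tClosEqTop_top
  tfae_have 3 → 4 := fun h3 I _ hItop hI => by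
    obtain ⟨M, hM, hIM⟩ := I.exists_le_maximal hItop
    exact hM.ne_top ((h3 M hM).eq_top_of_tClosEqTop (hI.mono hIM))
  tfae_have 4 → 3 := fun h4 M hM => hM.isT_of_not_tClosEqTop fun hM_top =>
    hM.ne_top (forall_not_tClosEqTop_iff.mp h4 M hM_top)
  tfae_have 4 → 6 := fun h4 I hI => by
    obtain ⟨N, hN⟩ :=
      le_one_iff_exists_coeIdeal.mp (FractionalIdeal.mul_inv_le_one (I : FractionalIdeal D⁰ _))
    have hNtop : N = ⊤ := forall_not_tClosEqTop_iff.mp h4 N (by rw [TClosEqTop, hN]; exact hI)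
    rw [← hN, hNtop, coeIdeal_top]
  tfae_have 6 → 4 := fun h6 => forall_not_tClosEqTop_iff.mpr fun I hI =>
    (Ideal.isT_of_mul_inv_eq_one (h6 I (tClos_mul_inv_eq_one hI))).eq_top_of_tClosEqTop hI
  tfae_finish
end
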